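/- Let μ be a regular uncountable cardinal, δ an ordinal, S ⊆ μ stationary, and g : S → des^{<ω}(δ) any function assigning to each α ∈ S a finite sequence of elements of des(δ). Then there is a stationary S' ⊆ S and a uniform total function g* : μ → des^{<ω}(δ) with g*↾S' = g↾S'. Here g* uniform means: all g*(α) have the same length m; for each i < m the sequences g*(α)(i) (α < μ) all have the same length; and for each i < m the map α ↦ g*(α)(i) is either constant or strictly <_lex-increasing. -/

import Mathlib

/-- `o` is an accumulation point of `C`. -/
def IsAcc (o : Ordinal) (C : Set Ordinal) : Prop :=
  o ≠ 0 ∧ ∀ b < o, ∃ c ∈ C, b < c ∧ c < o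

/-- `C` is closed and unbounded (a club) in `μ`. -/
def IsClubIn (C : Set Ordinal) (μ : Ordinal) : Prop :=
  (∀ o < μ, IsAcc o C → o ∈ C) ∧ ∀ b < μ, ∃ c ∈ C, b < c ∧ c < μ

/-- `S` is a stationary subset of `μ`. -/
def IsStationaryIn (S : Set Ordinal) (μ : Ordinal) : Prop :=
  S ⊆ Set.Iio μ ∧ ∀ C : Set Ordinal, IsClubIn C μ → (S ∩ C).Nonempty

/-- `g : μ → des^{<ω}(δ)` is uniform: constant outer length, constant coordinate
lengths, and each coordinate constant or strictly `<_lex`-increasing; all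
coordinates lie in `des(δ)`. -/
def IsUniform (δ μ : Ordinal) (g : Ordinal → List (List Ordinal)) : Prop :=
  (∀ α < μ, ∀ l ∈ g α, l.Pairwise (· > ·) ∧ ∀ x ∈ l, x < δ) ∧
  (∃ m : ℕ, ∀ α < μ, (g α).length = m) ∧
  (∀ i : ℕ, ∃ k : ℕ, ∀ α < μ, ((g α).getD i []).length = k) ∧
  (∀ i : ℕ,
    (∀ α < μ, ∀ β < μ, (g α).getD i [] = (g β).getD i []) ∨
    (∀ α β : Ordinal, α < β → β < μ →
      List.Lex (· < ·) ((g α).getD i []) ((g β).getD i [])))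

/-!
Each invariant of `g` is stabilised in turn on a smaller stationary set. The length profile
`α ↦ (g α).map List.length` takes countably many values; a code of it in `ℕ` is regressive
above `ω`, so by Fodor's lemma it is constant on a stationary set. Coordinates of equal length
bounded by `δ` are compared through their value in base `δ`, which turns `<_lex` into the order
of the ordinals. A function `f` into a well-order is constant or strictly increasing on a
stationary subset of `S`: unless `f` is strictly increasing on `S ∩ C` for a club `C`,
stationarily many `α` have an earlier `γ` with `f α ≤ f γ`, and pressing down `γ` bounds `f` by
`f γ` on a stationary set. Take the least `η` bounding `f` on a stationary `T ⊆ S`; either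
`f = η` stationarily often on `T`, or `f < η` on a stationary `T' ⊆ T`, where minimality of `η`
leaves only the increasing case. Finally, the enumeration `e` of the resulting stationary set
`S₂` is strictly increasing and fixes the points of `S₂` closed under `e`, so `g ∘ e` is uniform
and agrees with `g` on a stationary set.

The clubs needed along the way (intersections, diagonal intersections, closure points of `e`)
all come from one fact: as `cof μ > ω`, every `F` mapping `μ` into itself has unboundedly many
closure points `L`, i.e. `F y < L` for all `y < L`.
-/

open Cardinal Set

def IsConstOrStrictMonoOn {β : Type*} [Preorder β] (f : Ordinal → β) (s : Set Ordinal) :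
    Prop :=
  (∀ α ∈ s, ∀ α' ∈ s, f α = f α') ∨ StrictMonoOn f s

section IsConstOrStrictMonoOn

variable {β γ : Type*} [Preorder β] {f : Ordinal → β} {s t : Set Ordinal}

theorem IsConstOrStrictMonoOn.mono (h : IsConstOrStrictMonoOn f s) (hts : t ⊆ s) :
    IsConstOrStrictMonoOn f t :=
  h.imp (fun h α hα α' hα' => h α (hts hα) α' (hts hα')) fun h => h.mono hts

theorem IsConstOrStrictMonoOn.comp (h : IsConstOrStrictMonoOn f s) {e : Ordinal → Ordinal}
    (he : StrictMonoOn e t) (hmaps : MapsTo e t s) : IsConstOrStrictMonoOn (f ∘ e) t :=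
  h.imp (fun h _ hα _ hα' => h _ (hmaps hα) _ (hmaps hα'))
    fun h _ hα _ hα' hlt => h (hmaps hα) (hmaps hα') (he hα hα' hlt)

theorem IsConstOrStrictMonoOn.of_comp [LinearOrder γ] {φ : γ → β} {u : Set γ}
    {f : Ordinal → γ} (h : IsConstOrStrictMonoOn (φ ∘ f) s) (hφ : StrictMonoOn φ u)
    (hf : MapsTo f s u) : IsConstOrStrictMonoOn f s :=
  h.imp (fun h α hα α' hα' => hφ.injOn (hf hα) (hf hα') (h α hα α' hα'))
    fun h _ hα _ hα' hlt => (hφ.lt_iff_lt (hf hα) (hf hα')).1 (h hα hα' hlt)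

end IsConstOrStrictMonoOn

section Club

variable {μ : Cardinal} {o L b : Ordinal} {C D S T : Set Ordinal}

theorem iSup_Iio_add_one_lt_ord (hreg : μ.IsRegular) (ho : o < μ.ord)
    {F : Ordinal → Ordinal} (hF : ∀ y < o, F y < μ.ord) : ⨆ y : Iio o, F y + 1 < μ.ord := by
  apply Ordinal.lift_iSup_add_one_lt_of_lt_cof (f := fun y : Iio o => F y) _ fun y => hF y y.2
  rw [← Ordinal.lift_cof, hreg.cof_ord, Cardinal.mk_Iio_ordinal, Cardinal.lift_lift,
    Cardinal.lift_lt]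
  exact lt_ord.1 ho

theorem exists_closurePoint (hreg : μ.IsRegular) (hunc : ℵ₀ < μ) {F : Ordinal → Ordinal}
    (hF : ∀ x < μ.ord, F x < μ.ord) (hb : b < μ.ord) :
    ∃ L, b < L ∧ L < μ.ord ∧ ∀ y < L, F y < L := by
  -- `G x` bounds `y` and `F y` for all `y ≤ x`, so `nfp G b` is a closure point of `F`
  set G : Ordinal → Ordinal := fun x => ⨆ y : Iio (x + 1), max (y : Ordinal) (F y) + 1
  have hG : ∀ x < μ.ord, G x < μ.ord := fun x hx =>
    have hx1 := (isSuccLimit_ord hreg.aleph0_le).add_one_lt hx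
    iSup_Iio_add_one_lt_ord hreg hx1 fun y hy => max_lt (hy.trans hx1) (hF y (hy.trans hx1))
  have hdom : ∀ x, ∀ y ≤ x, max y (F y) < G x := fun x y hy =>
    (Order.lt_add_one_iff.2 le_rfl).trans_le <|
      Ordinal.le_iSup (fun z : Iio (x + 1) => max (z : Ordinal) (F z) + 1)
        ⟨y, Order.lt_add_one_iff.2 hy⟩
  refine ⟨Ordinal.nfp G b, ?_, nfp_lt_ord_of_isRegular hreg hunc.ne' hG hb, fun y hy => ?_⟩
  · exact ((le_max_left _ _).trans_lt (hdom b b le_rfl)).trans_le (Ordinal.iterate_le_nfp G b 1)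
  · obtain ⟨n, hn⟩ := Ordinal.lt_nfp_iff.1 hy
    calc F y ≤ max y (F y) := le_max_right _ _
      _ < G (G^[n] b) := hdom _ y hn.le
      _ ≤ Ordinal.nfp G b := by
        rw [← Function.iterate_succ_apply' G n b]
        exact Ordinal.iterate_le_nfp G b (n + 1)

/-- Junk value `0` when `C` has no element above `x`. -/
noncomputable def nextIn (C : Set Ordinal) (x : Ordinal) : Ordinal :=
  sInf {c ∈ C | x < c}

theorem IsClubIn.nextIn_spec (hC : IsClubIn C o) {x : Ordinal} (hx : x < o) :
    nextIn C x ∈ C ∧ x < nextIn C x ∧ nextIn C x < o := by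
  obtain ⟨c, hcC, hxc, hco⟩ := hC.2 x hx
  have hne : {c ∈ C | x < c}.Nonempty := ⟨c, hcC, hxc⟩
  exact ⟨(csInf_mem hne).1, (csInf_mem hne).2,
    (csInf_le' (s := {c ∈ C | x < c}) ⟨hcC, hxc⟩).trans_lt hco⟩

theorem IsClubIn.nextIn_mono (hC : IsClubIn C o) {y z : Ordinal} (hz : z < o) (hyz : y ≤ z) :
    nextIn C y ≤ nextIn C z :=
  csInf_le' ⟨(hC.nextIn_spec hz).1, hyz.trans_lt (hC.nextIn_spec hz).2.1⟩

theorem IsClubIn.mem_of_forall_nextIn_lt (hC : IsClubIn C o) (hL : L < o) (hL0 : L ≠ 0)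
    (h : ∀ y < L, nextIn C y < L) : L ∈ C :=
  hC.1 L hL ⟨hL0, fun y hy =>
    ⟨nextIn C y, (hC.nextIn_spec (hy.trans hL)).1, (hC.nextIn_spec (hy.trans hL)).2.1, h y hy⟩⟩

theorem IsAcc.mono (h : C ⊆ D) (hC : IsAcc o C) : IsAcc o D :=
  ⟨hC.1, fun b hb => (hC.2 b hb).imp fun _ ⟨hc, hbc⟩ => ⟨h hc, hbc⟩⟩

theorem isClubIn_Ioi (hreg : μ.IsRegular) (hb : b < μ.ord) : IsClubIn (Ioi b) μ.ord := by
  refine ⟨fun o _ ho => ?_, fun x hx => ?_⟩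
  · obtain ⟨c, hc, -, hco⟩ := ho.2 0 (pos_iff_ne_zero.2 ho.1)
    exact (mem_Ioi.1 hc).trans hco
  · have hlt := (isSuccLimit_ord hreg.aleph0_le).add_one_lt (max_lt hb hx)
    exact ⟨max b x + 1, (le_max_left b x).trans_lt (Order.lt_add_one_iff.2 le_rfl),
      (le_max_right b x).trans_lt (Order.lt_add_one_iff.2 le_rfl), hlt⟩

theorem IsClubIn.inter (hreg : μ.IsRegular) (hunc : ℵ₀ < μ) (hC : IsClubIn C μ.ord)
    (hD : IsClubIn D μ.ord) : IsClubIn (C ∩ D) μ.ord := by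
  refine ⟨fun o ho hacc => ⟨hC.1 o ho (hacc.mono inter_subset_left),
    hD.1 o ho (hacc.mono inter_subset_right)⟩, fun b hb => ?_⟩
  obtain ⟨L, hbL, hL, hFL⟩ := exists_closurePoint hreg hunc
    (F := fun x => max (nextIn C x) (nextIn D x))
    (fun x hx => max_lt (hC.nextIn_spec hx).2.2 (hD.nextIn_spec hx).2.2) hb
  have hL0 : L ≠ 0 := (pos_of_gt hbL).ne'
  exact ⟨L, ⟨hC.mem_of_forall_nextIn_lt hL hL0 fun y hy => (le_max_left _ _).trans_lt (hFL y hy),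
    hD.mem_of_forall_nextIn_lt hL hL0 fun y hy => (le_max_right _ _).trans_lt (hFL y hy)⟩,
    hbL, hL⟩

theorem isClubIn_diagInter (hreg : μ.IsRegular) (hunc : ℵ₀ < μ) {C : Ordinal → Set Ordinal}
    (hC : ∀ β < μ.ord, IsClubIn (C β) μ.ord) : IsClubIn {α | ∀ β < α, α ∈ C β} μ.ord := by
  refine ⟨fun o ho hacc β hβ => (hC β (hβ.trans ho)).1 o ho ⟨hacc.1, fun b hb => ?_⟩,
    fun b hb => ?_⟩
  · obtain ⟨c, hc, hbc, hco⟩ := hacc.2 (max b β) (max_lt hb hβ)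
    exact ⟨c, hc β ((le_max_right b β).trans_lt hbc), (le_max_left b β).trans_lt hbc, hco⟩
  have hF : ∀ x < μ.ord, ⨆ β : Iio (x + 1), nextIn (C β) x + 1 < μ.ord := fun x hx =>
    have hx1 := (isSuccLimit_ord hreg.aleph0_le).add_one_lt hx
    iSup_Iio_add_one_lt_ord hreg hx1 fun β hβ => ((hC β (hβ.trans hx1)).nextIn_spec hx).2.2
  obtain ⟨L, hbL, hL, hFL⟩ := exists_closurePoint hreg hunc hF hb
  refine ⟨L, fun β hβ => (hC β (hβ.trans hL)).mem_of_forall_nextIn_lt hL (pos_of_gt hbL).ne'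
    fun y hy => ?_, hbL, hL⟩
  -- only the clubs `C β'` with `β' ≤ x` enter the bound at `x`, so we pass to `max y β`
  have hz : max y β < L := max_lt hy hβ
  calc nextIn (C β) y ≤ nextIn (C β) (max y β) :=
        (hC β (hβ.trans hL)).nextIn_mono (hz.trans hL) (le_max_left y β)
    _ < nextIn (C β) (max y β) + 1 := Order.lt_add_one_iff.2 le_rfl
    _ ≤ ⨆ β' : Iio (max y β + 1), nextIn (C β') (max y β) + 1 :=
        Ordinal.le_iSup (fun β' : Iio (max y β + 1) => nextIn (C β') (max y β) + 1)
          ⟨β, Order.lt_add_one_iff.2 (le_max_right y β)⟩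
    _ < L := hFL _ hz

theorem IsStationaryIn.mono (hS : IsStationaryIn S o) (hST : S ⊆ T) (hT : T ⊆ Iio o) :
    IsStationaryIn T o :=
  ⟨hT, fun C hC => (hS.2 C hC).mono (inter_subset_inter_left C hST)⟩

theorem IsStationaryIn.inter_isClubIn (hreg : μ.IsRegular) (hunc : ℵ₀ < μ)
    (hS : IsStationaryIn S μ.ord) (hC : IsClubIn C μ.ord) : IsStationaryIn (S ∩ C) μ.ord :=
  ⟨inter_subset_left.trans hS.1, fun D hD => (hS.2 _ (hC.inter hreg hunc hD)).mono
    (inter_assoc S C D).symm.subset⟩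

theorem IsStationaryIn.exists_gt (hreg : μ.IsRegular) (hS : IsStationaryIn S μ.ord)
    (hb : b < μ.ord) : ∃ α ∈ S, b < α :=
  hS.2 _ (isClubIn_Ioi hreg hb)

theorem IsStationaryIn.nonempty (hreg : μ.IsRegular) (hS : IsStationaryIn S μ.ord) :
    S.Nonempty :=
  (hS.exists_gt hreg (ord_pos.2 hreg.pos)).imp fun _ h => h.1

theorem exists_isClubIn_disjoint_of_not_isStationaryIn (hS : S ⊆ Iio o)
    (h : ¬ IsStationaryIn S o) : ∃ C, IsClubIn C o ∧ ∀ α ∈ S, α ∉ C := by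
  simp only [IsStationaryIn, hS, true_and, not_forall] at h
  obtain ⟨C, hC, hSC⟩ := h
  exact ⟨C, hC, fun α hα hαC => hSC ⟨α, hα, hαC⟩⟩

/-- Fodor's lemma. -/
theorem IsStationaryIn.exists_isStationaryIn_fiber_of_regressive (hreg : μ.IsRegular)
    (hunc : ℵ₀ < μ) (hS : IsStationaryIn S μ.ord) {f : Ordinal → Ordinal}
    (hf : ∀ α ∈ S, f α < α) : ∃ β, IsStationaryIn {α ∈ S | f α = β} μ.ord := by
  by_contra! h
  choose C hC hfiber using fun β =>
    exists_isClubIn_disjoint_of_not_isStationaryIn ((sep_subset S _).trans hS.1) (h β)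
  obtain ⟨α, hαS, hαC⟩ := hS.2 _ (isClubIn_diagInter hreg hunc fun β _ => hC β)
  exact hfiber (f α) α ⟨hαS, rfl⟩ (hαC (f α) (hf α hαS))

theorem IsStationaryIn.exists_isStationaryIn_fiber_of_countable (hreg : μ.IsRegular)
    (hunc : ℵ₀ < μ) {ι : Type*} [Countable ι] (hS : IsStationaryIn S μ.ord)
    (f : Ordinal → ι) : ∃ c, IsStationaryIn {α ∈ S | f α = c} μ.ord := by
  obtain ⟨code, hcode⟩ := Countable.exists_injective_nat ι
  have hω : Ordinal.omega0 < μ.ord := by rwa [← ord_aleph0, ord_lt_ord]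
  obtain ⟨β, hβ⟩ := (hS.inter_isClubIn hreg hunc (isClubIn_Ioi hreg hω)
    ).exists_isStationaryIn_fiber_of_regressive hreg hunc (f := fun α => code (f α))
    fun α hα => (Ordinal.natCast_lt_omega0 _).trans hα.2
  obtain ⟨α₀, ⟨-, hα₀⟩, -⟩ := hβ.exists_gt hreg (hω.trans' Ordinal.omega0_pos)
  refine ⟨f α₀, hβ.mono (fun α ⟨⟨hαS, _⟩, hα⟩ => ⟨hαS, hcode ?_⟩) ((sep_subset S _).trans hS.1)⟩
  exact_mod_cast hα.trans hα₀.symm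

theorem IsStationaryIn.exists_strictMonoOn_or_le (hreg : μ.IsRegular) (hunc : ℵ₀ < μ)
    {β : Type*} [LinearOrder β] (hS : IsStationaryIn S μ.ord) (f : Ordinal → β) :
    (∃ C, IsClubIn C μ.ord ∧ StrictMonoOn f (S ∩ C)) ∨
      ∃ γ ∈ S, IsStationaryIn {α ∈ S | f α ≤ f γ} μ.ord := by
  set A := {α ∈ S | ∃ γ ∈ S, γ < α ∧ f α ≤ f γ}
  have hA : A ⊆ Iio μ.ord := (sep_subset S _).trans hS.1
  by_cases hAstat : IsStationaryIn A μ.ord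
  · set r : Ordinal → Ordinal := fun α => sInf {γ ∈ S | γ < α ∧ f α ≤ f γ}
    have hr : ∀ α ∈ A, r α ∈ S ∧ r α < α ∧ f α ≤ f (r α) := fun α hα => csInf_mem hα.2
    obtain ⟨γ, hγ⟩ := hAstat.exists_isStationaryIn_fiber_of_regressive hreg hunc
      fun α hα => (hr α hα).2.1
    obtain ⟨α₀, hα₀A, rfl⟩ := hγ.nonempty hreg
    refine Or.inr ⟨r α₀, (hr α₀ hα₀A).1,
      hγ.mono (fun α ⟨hαA, hα⟩ => ⟨hαA.1, ?_⟩) ((sep_subset S _).trans hS.1)⟩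
    exact hα ▸ (hr α hαA).2.2
  · obtain ⟨C, hC, hAC⟩ := exists_isClubIn_disjoint_of_not_isStationaryIn hA hAstat
    refine Or.inl ⟨C, hC, fun α hα α' hα' hαα' => lt_of_not_ge fun hle => ?_⟩
    exact hAC α' ⟨hα'.1, α, hα.1, hαα', hle⟩ hα'.2

theorem IsStationaryIn.exists_isConstOrStrictMonoOn (hreg : μ.IsRegular) (hunc : ℵ₀ < μ)
    {β : Type*} [LinearOrder β] [WellFoundedLT β] (hS : IsStationaryIn S μ.ord)
    (f : Ordinal → β) : ∃ S' ⊆ S, IsStationaryIn S' μ.ord ∧ IsConstOrStrictMonoOn f S' := by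
  rcases hS.exists_strictMonoOn_or_le hreg hunc f with ⟨C, hC, hmono⟩ | ⟨γ, -, hγ⟩
  · exact ⟨S ∩ C, inter_subset_left, hS.inter_isClubIn hreg hunc hC, Or.inr hmono⟩
  obtain ⟨η, ⟨T, hTS, hT, hTη⟩, hmin⟩ := wellFounded_lt.has_min
    {η | ∃ T ⊆ S, IsStationaryIn T μ.ord ∧ ∀ α ∈ T, f α ≤ η}
    ⟨f γ, _, sep_subset S _, hγ, fun α hα => hα.2⟩
  by_cases hconst : IsStationaryIn {α ∈ T | f α = η} μ.ord
  · exact ⟨_, (sep_subset T _).trans hTS, hconst,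
      Or.inl fun α hα α' hα' => hα.2.trans hα'.2.symm⟩
  obtain ⟨D, hD, hTD⟩ :=
    exists_isClubIn_disjoint_of_not_isStationaryIn ((sep_subset T _).trans hT.1) hconst
  have hlt : ∀ α ∈ T ∩ D, f α < η := fun α hα =>
    (hTη α hα.1).lt_of_ne fun h => hTD α ⟨hα.1, h⟩ hα.2
  have hTD' := hT.inter_isClubIn hreg hunc hD
  -- by minimality of `η`, `f` cannot be bounded by an earlier value on `T ∩ D`
  rcases hTD'.exists_strictMonoOn_or_le hreg hunc f with ⟨C, hC, hmono⟩ | ⟨γ, hγ, hγstat⟩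
  · exact ⟨T ∩ D ∩ C, inter_subset_left.trans (inter_subset_left.trans hTS),
      hTD'.inter_isClubIn hreg hunc hC, Or.inr hmono⟩
  · exact absurd (hlt γ hγ) <| hmin (f γ)
      ⟨_, (sep_subset _ _).trans (inter_subset_left.trans hTS), hγstat, fun α hα => hα.2⟩

theorem IsStationaryIn.exists_forall_lt_isConstOrStrictMonoOn (hreg : μ.IsRegular)
    (hunc : ℵ₀ < μ) {β : Type*} [LinearOrder β] [WellFoundedLT β] (hS : IsStationaryIn S μ.ord)
    (f : ℕ → Ordinal → β) (n : ℕ) :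
    ∃ S' ⊆ S, IsStationaryIn S' μ.ord ∧ ∀ i < n, IsConstOrStrictMonoOn (f i) S' := by
  induction n with
  | zero => exact ⟨S, subset_rfl, hS, fun i hi => absurd hi i.not_lt_zero⟩
  | succ n ih =>
    obtain ⟨T, hTS, hT, hTf⟩ := ih
    obtain ⟨T', hT'T, hT', hT'f⟩ := hT.exists_isConstOrStrictMonoOn hreg hunc (f n)
    refine ⟨T', hT'T.trans hTS, hT', fun i hi => ?_⟩
    rcases Nat.lt_succ_iff_lt_or_eq.1 hi with hi | rfl
    · exact (hTf i hi).mono hT'T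
    · exact hT'f

theorem IsStationaryIn.exists_strictMono_eq_on_isClubIn (hreg : μ.IsRegular) (hunc : ℵ₀ < μ)
    (hS : IsStationaryIn S μ.ord) :
    ∃ e : Ordinal → Ordinal, StrictMono e ∧ MapsTo e (Iio μ.ord) S ∧
      ∃ C, IsClubIn C μ.ord ∧ ∀ α ∈ S ∩ C, e α = α := by
  -- padding `S` by `[μ.ord, ∞)` makes it unbounded, as `enumOrd` requires
  have hT : ¬ BddAbove (S ∪ Ici μ.ord) := fun h => not_bddAbove_Ici _ (h.mono subset_union_right)
  set e := Ordinal.enumOrd (S ∪ Ici μ.ord)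
  have he : MapsTo e (Iio μ.ord) S := by
    intro α hα
    induction α using WellFoundedLT.induction with
    | _ α ih =>
      have hsup := iSup_Iio_add_one_lt_ord hreg hα fun β hβ => hS.1 (ih β hβ (hβ.trans hα))
      obtain ⟨y, hyS, hy⟩ := hS.exists_gt hreg hsup
      have heα : e α ≤ y := Ordinal.enumOrd_le_of_forall_lt (Or.inl hyS) fun β hβ =>
        (Order.lt_add_one_iff.2 le_rfl).trans_le
          ((Ordinal.le_iSup (fun β : Iio α => e β + 1) ⟨β, hβ⟩).trans hy.le)
      exact (Ordinal.enumOrd_mem hT α).resolve_right (not_le.2 (heα.trans_lt (hS.1 hyS)))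
  refine ⟨e, Ordinal.enumOrd_strictMono hT, he, {α | ∀ β < α, α ∈ Ioi (e β)},
    isClubIn_diagInter hreg hunc fun β hβ => isClubIn_Ioi hreg (hS.1 (he hβ)), fun α hα => ?_⟩
  exact le_antisymm (Ordinal.enumOrd_le_of_forall_lt (Or.inl hα.1) hα.2)
    (Ordinal.le_enumOrd_self hT)

end Club

def baseValue (δ : Ordinal) : List Ordinal → Ordinal
  | [] => 0
  | a :: l => δ ^ l.length * a + baseValue δ l

theorem baseValue_lt {δ : Ordinal} {l : List Ordinal} (hl : ∀ x ∈ l, x < δ) :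
    baseValue δ l < δ ^ l.length := by
  induction l with
  | nil => simp [baseValue]
  | cons a l ih =>
    rw [List.forall_mem_cons] at hl
    calc δ ^ l.length * a + baseValue δ l < δ ^ l.length * a + δ ^ l.length := by
          gcongr; exact ih hl.2
      _ = δ ^ l.length * (a + 1) := by rw [mul_add, mul_one]
      _ ≤ δ ^ l.length * δ := by gcongr; exact Order.add_one_le_iff.2 hl.1
      _ = δ ^ (a :: l).length := by rw [List.length_cons, pow_succ]

/-- Here `<` on `List Ordinal` is `List.Lex (· < ·)`. -/
theorem baseValue_strictMonoOn (δ : Ordinal) (n : ℕ) :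
    StrictMonoOn (baseValue δ) {l | l.length = n ∧ ∀ x ∈ l, x < δ} := by
  rintro l ⟨rfl, hl⟩ l' ⟨hlen, hl'⟩ (hlt : List.Lex (· < ·) l l')
  induction hlt with
  | nil => simp at hlen
  | @cons a l l' _ ih =>
    simp only [List.length_cons, add_left_inj, List.forall_mem_cons] at hlen hl hl'
    simp only [baseValue, hlen]
    gcongr
    exact ih hl.2 hlen hl'.2
  | @rel a l b l' hab =>
    simp only [List.length_cons, add_left_inj, List.forall_mem_cons] at hlen hl hl'
    calc baseValue δ (a :: l) < δ ^ l.length * (a + 1) := by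
          rw [mul_add, mul_one, baseValue]; gcongr; exact baseValue_lt hl.2
      _ ≤ δ ^ l'.length * b := by rw [hlen]; gcongr; exact Order.add_one_le_iff.2 hab
      _ ≤ baseValue δ (b :: l') := le_self_add

section GetD

variable {α : Type*} {L : List (List α)} {c : List ℕ}

theorem List.length_getD_nil_of_map_length_eq (hc : L.map List.length = c) (i : ℕ) :
    (L.getD i []).length = c.getD i 0 := by
  rw [← hc]
  exact (List.getD_map _ _ _).symm

theorem List.getD_nil_eq_nil_of_map_length_eq (hc : L.map List.length = c) {i : ℕ}
    (hi : c.length ≤ i) : L.getD i [] = [] :=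
  List.getD_eq_default _ _ (by rwa [← hc, List.length_map] at hi)

theorem List.forall_mem_getD_nil {p : α → Prop} (h : ∀ l ∈ L, ∀ x ∈ l, p x) (i : ℕ) :
    ∀ x ∈ L.getD i [], p x := by
  rcases lt_or_ge i L.length with hi | hi
  · rw [List.getD_eq_getElem _ _ hi]
    exact h _ (List.getElem_mem hi)
  · rw [List.getD_eq_default _ _ hi]
    exact fun x hx => absurd hx List.not_mem_nil

end GetD

theorem isUniform_of_map_length_eq {δ o : Ordinal} {gs : Ordinal → List (List Ordinal)}
    (c : List ℕ) (hdes : ∀ α < o, ∀ l ∈ gs α, l.Pairwise (· > ·) ∧ ∀ x ∈ l, x < δ)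
    (hlen : ∀ α < o, (gs α).map List.length = c)
    (hcoord : ∀ i, IsConstOrStrictMonoOn (fun α => (gs α).getD i []) (Iio o)) :
    IsUniform δ o gs := by
  refine ⟨hdes, ⟨c.length, fun α hα => by rw [← hlen α hα, List.length_map]⟩,
    fun i => ⟨c.getD i 0, fun α hα => List.length_getD_nil_of_map_length_eq (hlen α hα) i⟩,
    fun i => (hcoord i).imp (fun h α hα β hβ => h α hα β hβ) fun h α β hαβ hβ => ?_⟩
  exact h (hαβ.trans hβ) hβ hαβ

/-- Any `g : S → des^{<ω}(δ)` on a stationary `S ⊆ μ` agrees on a stationary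
`S' ⊆ S` with a uniform total function `g* : μ → des^{<ω}(δ)`. -/
theorem stmt13 (μ : Cardinal) (hreg : μ.IsRegular) (hunc : Cardinal.aleph0 < μ)
    (δ : Ordinal) (S : Set Ordinal) (hS : IsStationaryIn S μ.ord)
    (g : Ordinal → List (List Ordinal))
    (hg : ∀ α ∈ S, ∀ l ∈ g α, l.Pairwise (· > ·) ∧ ∀ x ∈ l, x < δ) :
    ∃ S' ⊆ S, IsStationaryIn S' μ.ord ∧
      ∃ gs : Ordinal → List (List Ordinal),
        IsUniform δ μ.ord gs ∧ ∀ α ∈ S', gs α = g α := by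
  obtain ⟨c, hS₁⟩ :=
    hS.exists_isStationaryIn_fiber_of_countable hreg hunc fun α => (g α).map List.length
  set S₁ := {α ∈ S | (g α).map List.length = c}
  obtain ⟨S₂, hS₂S₁, hS₂, hS₂coord⟩ := hS₁.exists_forall_lt_isConstOrStrictMonoOn hreg hunc
    (fun i α => baseValue δ ((g α).getD i [])) c.length
  have hcoord : ∀ i, IsConstOrStrictMonoOn (fun α => (g α).getD i []) S₂ := by
    intro i
    by_cases hi : i < c.length
    · refine (hS₂coord i hi).of_comp (baseValue_strictMonoOn δ _) fun α hα =>
        ⟨List.length_getD_nil_of_map_length_eq (hS₂S₁ hα).2 i,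
          List.forall_mem_getD_nil (fun l hl => (hg α (hS₂S₁ hα).1 l hl).2) i⟩
    · refine Or.inl fun α hα α' hα' => ?_
      simp only [List.getD_nil_eq_nil_of_map_length_eq (hS₂S₁ hα).2 (not_lt.1 hi),
        List.getD_nil_eq_nil_of_map_length_eq (hS₂S₁ hα').2 (not_lt.1 hi)]
  obtain ⟨e, he, heS₂, C, hC, hfix⟩ := hS₂.exists_strictMono_eq_on_isClubIn hreg hunc
  refine ⟨S₂ ∩ C, fun α hα => (hS₂S₁ hα.1).1, hS₂.inter_isClubIn hreg hunc hC, g ∘ e, ?_,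
    fun α hα => congrArg g (hfix α hα)⟩
  exact isUniform_of_map_length_eq c (fun α hα => hg _ (hS₂S₁ (heS₂ hα)).1)
    (fun α hα => (hS₂S₁ (heS₂ hα)).2) fun i => (hcoord i).comp (he.strictMonoOn _) heS₂
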